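/- arXiv:1805.02344 — 3 statements merged into one kernel-verified Lean document; each statement's English description precedes it below -/
import Mathlib

section
/- Let n, η : Ω → ℝ^m and x : Ω → ℝ^k be random vectors on a probability space (Ω, F, P) with square-integrable components, suppose n is independent of the pair (x, η), suppose E[n_i] = 1 for every i, and suppose E[x_j] = 0 for every j. Let A ∈ ℝ^{m×k}, let e = (n − 1) ⊙ (Ax) + η be the embedded error, and let Γ_xx ∈ ℝ^{k×k} be the covariance matrix of x, (Γ_xx)_{jl} = cov(x_j, x_l). Then for all indices i, j, cov(e_i, e_j) = cov(η_i, η_j) + cov(n_i, n_j) · (A Γ_xx Aᵀ)_{ij}; that is, the covariance of the embedded error is Γ_ee = Γ_ηη + Γ_nn ⊙ (A Γ_xx Aᵀ). -/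
/-!
Write `c = n - 1` and `u = A x`, so that `e = c ⊙ u + η`. Independence of `n` from `(x, η)`
makes every mixed moment factor, and `E[c] = 0` kills the cross terms `E[c_i u_i η_j]` as well
as `E[c_i u_i]`. What remains is `cov(η_i, η_j) + E[c_i c_j] E[u_i u_j]`, where
`E[c_i c_j] = cov(n_i, n_j)` because `E[n] = 1`, and `E[u_i u_j] = (A Γxx Aᵀ)_ij` because
`E[x] = 0` and covariance is bilinear.
-/

open MeasureTheory Matrix ProbabilityTheory

section
variable {Ω ι κ κ' : Type*} [MeasurableSpace Ω] {P : Measure Ω} [Fintype ι]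

theorem memLp_mulVec_apply {p : ENNReal} {X : Ω → ι → ℝ} (hX : ∀ l, MemLp (fun ω => X ω l) p P)
    (A : Matrix κ ι ℝ) (i : κ) : MemLp (fun ω => (A *ᵥ X ω) i) p P := by
  simpa only [mulVec, dotProduct] using memLp_finsetSum _ fun l _ => (hX l).const_mul (A i l)

theorem integral_mulVec_apply {X : Ω → ι → ℝ} (hX : ∀ l, Integrable (fun ω => X ω l) P)
    (A : Matrix κ ι ℝ) (i : κ) :
    ∫ ω, (A *ᵥ X ω) i ∂P = (A *ᵥ fun l => ∫ ω, X ω l ∂P) i := by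
  simp only [mulVec, dotProduct]
  rw [integral_finsetSum _ fun l _ => (hX l).const_mul (A i l)]
  simp only [integral_const_mul]

theorem covariance_mulVec_apply_mulVec_apply [IsFiniteMeasure P] {X : Ω → ι → ℝ}
    (hX : ∀ l, MemLp (fun ω => X ω l) 2 P) (A : Matrix κ ι ℝ) (B : Matrix κ' ι ℝ) (i : κ) (j : κ') :
    cov[fun ω => (A *ᵥ X ω) i, fun ω => (B *ᵥ X ω) j; P]
      = (A * Matrix.of (fun l l' => cov[fun ω => X ω l, fun ω => X ω l'; P]) * Bᵀ) i j := by
  simp only [mulVec, dotProduct]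
  rw [covariance_fun_sum_fun_sum (fun l => (hX l).const_mul (A i l))
    (fun l => (hX l).const_mul (B j l))]
  simp only [covariance_const_mul_left, covariance_const_mul_right, mul_apply, of_apply,
    transpose_apply, Finset.sum_mul]
  rw [Finset.sum_comm]
  exact Finset.sum_congr rfl fun l _ => Finset.sum_congr rfl fun l' _ => by ring

theorem ProbabilityTheory.IndepFun.integral_fun_mul_eq_zero_of_integral_left {c v : Ω → ℝ}
    (hcv : IndepFun c v P) (hc : AEStronglyMeasurable c P) (hv : AEStronglyMeasurable v P)
    (hc0 : ∫ ω, c ω ∂P = 0) :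
    ∫ ω, c ω * v ω ∂P = 0 := by
  rw [hcv.integral_fun_mul_eq_mul_integral hc hv, hc0, zero_mul]

theorem ProbabilityTheory.IndepFun.integral_mul_add_eq_of_integral_left {c u h : Ω → ℝ}
    (hcu : IndepFun c u P) (hc : Integrable c P) (hu : Integrable u P) (hh : Integrable h P)
    (hc0 : ∫ ω, c ω ∂P = 0) :
    ∫ ω, c ω * u ω + h ω ∂P = ∫ ω, h ω ∂P := by
  have hcu_int : Integrable (fun ω => c ω * u ω) P := hcu.integrable_mul hc hu
  rw [integral_add hcu_int hh,
    hcu.integral_fun_mul_eq_zero_of_integral_left hc.1 hu.1 hc0, zero_add]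

theorem cov_mul_add_mul_add_of_indepFun [IsProbabilityMeasure P] {c₁ c₂ u₁ u₂ h₁ h₂ : Ω → ℝ}
    (hind : IndepFun (fun ω => (c₁ ω, c₂ ω)) (fun ω => (u₁ ω, u₂ ω, h₁ ω, h₂ ω)) P)
    (hc₁ : MemLp c₁ 2 P) (hc₂ : MemLp c₂ 2 P) (hu₁ : MemLp u₁ 2 P) (hu₂ : MemLp u₂ 2 P)
    (hh₁ : MemLp h₁ 2 P) (hh₂ : MemLp h₂ 2 P)
    (hc₁0 : ∫ ω, c₁ ω ∂P = 0) (hc₂0 : ∫ ω, c₂ ω ∂P = 0) :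
    (∫ ω, (c₁ ω * u₁ ω + h₁ ω) * (c₂ ω * u₂ ω + h₂ ω) ∂P)
        - (∫ ω, c₁ ω * u₁ ω + h₁ ω ∂P) * (∫ ω, c₂ ω * u₂ ω + h₂ ω ∂P)
      = ((∫ ω, h₁ ω * h₂ ω ∂P) - (∫ ω, h₁ ω ∂P) * (∫ ω, h₂ ω ∂P))
        + (∫ ω, c₁ ω * c₂ ω ∂P) * (∫ ω, u₁ ω * u₂ ω ∂P) := by
  have hcc : IndepFun (fun ω => c₁ ω * c₂ ω) (fun ω => u₁ ω * u₂ ω) P :=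
    hind.comp (φ := fun p : ℝ × ℝ => p.1 * p.2) (ψ := fun q : ℝ × ℝ × ℝ × ℝ => q.1 * q.2.1)
      (by fun_prop) (by fun_prop)
  have h₁u₁ : IndepFun c₁ u₁ P :=
    hind.comp (φ := Prod.fst) (ψ := Prod.fst) (by fun_prop) (by fun_prop)
  have h₂u₂ : IndepFun c₂ u₂ P :=
    hind.comp (φ := Prod.snd) (ψ := fun q : ℝ × ℝ × ℝ × ℝ => q.2.1) (by fun_prop) (by fun_prop)
  have h₁uh : IndepFun c₁ (fun ω => u₁ ω * h₂ ω) P :=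
    hind.comp (φ := Prod.fst) (ψ := fun q : ℝ × ℝ × ℝ × ℝ => q.1 * q.2.2.2)
      (by fun_prop) (by fun_prop)
  have h₂uh : IndepFun c₂ (fun ω => u₂ ω * h₁ ω) P :=
    hind.comp (φ := Prod.snd) (ψ := fun q : ℝ × ℝ × ℝ × ℝ => q.2.1 * q.2.2.1)
      (by fun_prop) (by fun_prop)
  have hT₁ : Integrable (fun ω => c₁ ω * c₂ ω * (u₁ ω * u₂ ω)) P :=
    hcc.integrable_mul (hc₁.integrable_mul hc₂) (hu₁.integrable_mul hu₂)
  have hT₂ : Integrable (fun ω => c₁ ω * (u₁ ω * h₂ ω)) P :=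
    h₁uh.integrable_mul (hc₁.integrable one_le_two) (hu₁.integrable_mul hh₂)
  have hT₃ : Integrable (fun ω => c₂ ω * (u₂ ω * h₁ ω)) P :=
    h₂uh.integrable_mul (hc₂.integrable one_le_two) (hu₂.integrable_mul hh₁)
  have hT₄ : Integrable (fun ω => h₁ ω * h₂ ω) P := hh₁.integrable_mul hh₂
  have hexpand : (fun ω => (c₁ ω * u₁ ω + h₁ ω) * (c₂ ω * u₂ ω + h₂ ω)) = fun ω =>
      c₁ ω * c₂ ω * (u₁ ω * u₂ ω)
        + (c₁ ω * (u₁ ω * h₂ ω) + (c₂ ω * (u₂ ω * h₁ ω) + h₁ ω * h₂ ω)) := by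
    ext ω; ring
  rw [hexpand, integral_add hT₁ (hT₂.fun_add (hT₃.fun_add hT₄)),
    integral_add hT₂ (hT₃.fun_add hT₄), integral_add hT₃ hT₄,
    hcc.integral_fun_mul_eq_mul_integral (hc₁.integrable_mul hc₂).1 (hu₁.integrable_mul hu₂).1,
    h₁uh.integral_fun_mul_eq_zero_of_integral_left hc₁.1 (hu₁.integrable_mul hh₂).1 hc₁0,
    h₂uh.integral_fun_mul_eq_zero_of_integral_left hc₂.1 (hu₂.integrable_mul hh₁).1 hc₂0,
    h₁u₁.integral_mul_add_eq_of_integral_left (hc₁.integrable one_le_two)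
      (hu₁.integrable one_le_two) (hh₁.integrable one_le_two) hc₁0,
    h₂u₂.integral_mul_add_eq_of_integral_left (hc₂.integrable one_le_two)
      (hu₂.integrable one_le_two) (hh₂.integrable one_le_two) hc₂0]
  ring

end

/-- Covariance of the embedded error `e = (n - 1) ⊙ (A x) + η`:
if `n` is independent of the pair `(x, η)`, the components are square-integrable,
`E[n i] = 1` and `E[x j] = 0`, then
`cov(e i, e j) = cov(η i, η j) + cov(n i, n j) * (A Γxx Aᵀ) i j`. -/
theorem embedded_error_covariance {Ω : Type*} [MeasurableSpace Ω]
    (P : Measure Ω) [IsProbabilityMeasure P] {m k : ℕ}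
    (n η : Ω → Fin m → ℝ) (x : Ω → Fin k → ℝ)
    (hn : Measurable n) (hη : Measurable η) (hx : Measurable x)
    (hn2 : ∀ i, MemLp (fun ω => n ω i) 2 P)
    (hη2 : ∀ i, MemLp (fun ω => η ω i) 2 P)
    (hx2 : ∀ j, MemLp (fun ω => x ω j) 2 P)
    (hindep : Measure.map (fun ω => (n ω, (x ω, η ω))) P
        = (Measure.map n P).prod (Measure.map (fun ω => (x ω, η ω)) P))
    (hnmean : ∀ i, ∫ ω, n ω i ∂P = 1)
    (hxmean : ∀ j, ∫ ω, x ω j ∂P = 0)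
    (A : Matrix (Fin m) (Fin k) ℝ) (i j : Fin m) :
    let e : Ω → Fin m → ℝ := fun ω i => (n ω i - 1) * A.mulVec (x ω) i + η ω i
    let Γxx : Matrix (Fin k) (Fin k) ℝ :=
      Matrix.of fun j l => (∫ ω, x ω j * x ω l ∂P) - (∫ ω, x ω j ∂P) * (∫ ω, x ω l ∂P)
    (∫ ω, e ω i * e ω j ∂P) - (∫ ω, e ω i ∂P) * (∫ ω, e ω j ∂P)
      = ((∫ ω, η ω i * η ω j ∂P) - (∫ ω, η ω i ∂P) * (∫ ω, η ω j ∂P))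
        + ((∫ ω, n ω i * n ω j ∂P) - (∫ ω, n ω i ∂P) * (∫ ω, n ω j ∂P))
            * (A * Γxx * Aᵀ) i j := by
  intro e Γxx
  have hind : IndepFun n (fun ω => (x ω, η ω)) P :=
    (indepFun_iff_map_prod_eq_prod_map_map hn.aemeasurable (hx.prodMk hη).aemeasurable).mpr hindep
  have hc0 : ∀ p, ∫ ω, (n ω p - 1) ∂P = 0 := fun p => by
    rw [integral_sub ((hn2 p).integrable one_le_two) (integrable_const 1), hnmean]; simp
  have hAx0 : ∀ p, ∫ ω, (A *ᵥ x ω) p ∂P = 0 := fun p => by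
    rw [integral_mulVec_apply (fun l => (hx2 l).integrable one_le_two), funext hxmean,
      ← Pi.zero_def, mulVec_zero, Pi.zero_apply]
  have hcov_n : ∫ ω, (n ω i - 1) * (n ω j - 1) ∂P
      = (∫ ω, n ω i * n ω j ∂P) - (∫ ω, n ω i ∂P) * (∫ ω, n ω j ∂P) := by
    calc ∫ ω, (n ω i - 1) * (n ω j - 1) ∂P = cov[fun ω => n ω i, fun ω => n ω j; P] := by
          rw [covariance, hnmean, hnmean]
      _ = _ := covariance_eq_sub (hn2 i) (hn2 j)
  have hΓxx : Γxx = Matrix.of fun l l' => cov[fun ω => x ω l, fun ω => x ω l'; P] := by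
    ext l l'
    exact (covariance_eq_sub (hx2 l) (hx2 l')).symm
  have hcov_Ax : ∫ ω, (A *ᵥ x ω) i * (A *ᵥ x ω) j ∂P = (A * Γxx * Aᵀ) i j := by
    rw [hΓxx, ← covariance_mulVec_apply_mulVec_apply hx2, covariance, hAx0, hAx0]
    simp only [sub_zero]
  rw [← hcov_n, ← hcov_Ax]
  exact cov_mul_add_mul_add_of_indepFun
    (hind.comp (φ := fun v : Fin m → ℝ => (v i - 1, v j - 1))
      (ψ := fun q : (Fin k → ℝ) × (Fin m → ℝ) => ((A *ᵥ q.1) i, (A *ᵥ q.1) j, q.2 i, q.2 j))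
      (by fun_prop) (by fun_prop))
    ((hn2 i).sub (memLp_const 1)) ((hn2 j).sub (memLp_const 1))
    (memLp_mulVec_apply hx2 A i) (memLp_mulVec_apply hx2 A j) (hη2 i) (hη2 j) (hc0 i) (hc0 j)
end

section
/- Let n, η : Ω → ℝ^m and x : Ω → ℝ^k be random vectors on a probability space (Ω, F, P) with square-integrable components, suppose n is independent of the pair (x, η), suppose E[n_i] = 1 for every i, and suppose E[x_j] = 0 for every j. Let A ∈ ℝ^{m×k}, let e = (n − 1) ⊙ (Ax) + η be the embedded error, let Γ_ee, Γ_ηη, Γ_nn, Γ_xx denote the covariance matrices of e, η, n, x respectively, let Γ_ex, Γ_ηx denote the cross-covariance matrices (Γ_ex)_{ij} = cov(e_i, x_j) and (Γ_ηx)_{ij} = cov(η_i, x_j), and assume Γ_xx is invertible. Then the Schur complement of the joint covariance of (e, x) satisfies Γ_ee − Γ_ex Γ_xx^{-1} Γ_xe = Γ_ηη + Γ_nn ⊙ (A Γ_xx Aᵀ) − Γ_ηx Γ_xx^{-1} Γ_xη, where Γ_xe = Γ_exᵀ and Γ_xη = Γ_ηxᵀ. -/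
/-!
Write `e = u + η` with `u = (n - 1) ⊙ (A x)`. The factor `n - 1` is centred and independent of
`(x, η)`, so `u` is uncorrelated with both `x` and `η`; hence `Γex = Γηx` and
`Γee = Γuu + Γηη`. For independent pairs `(X, X')`, `(V, W)` with `E X = E V = 0` one has
`cov(X V, X' W) = cov(X, X') cov(V, W)`, and `A x` is centred, so
`Γuu = Γnn ⊙ Γ_{Ax,Ax} = Γnn ⊙ (A Γxx Aᵀ)`. The two Schur complements then agree term by term.
-/

open MeasureTheory Matrix
open scoped ENNReal

namespace ProbabilityTheory

variable {Ω : Type*} [MeasurableSpace Ω] {μ : Measure Ω}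

lemma IndepFun.memLp_two_mul {X Y : Ω → ℝ} (h : X ⟂ᵢ[μ] Y) (hX : MemLp X 2 μ)
    (hY : MemLp Y 2 μ) : MemLp (X * Y) 2 μ := by
  rw [memLp_two_iff_integrable_sq (hX.aestronglyMeasurable.mul hY.aestronglyMeasurable)]
  refine ((h.comp (measurable_id.pow_const 2) (measurable_id.pow_const 2)).integrable_mul
    hX.integrable_sq hY.integrable_sq).congr (.of_forall fun ω ↦ ?_)
  simp [mul_pow]

lemma IndepFun.covariance_mul_left_eq_zero [IsProbabilityMeasure μ] {X V W : Ω → ℝ}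
    (h : X ⟂ᵢ[μ] fun ω ↦ (V ω, W ω)) (hX : MemLp X 2 μ) (hV : MemLp V 2 μ)
    (hW : MemLp W 2 μ) (hX0 : μ[X] = 0) : cov[X * V, W; μ] = 0 := by
  have hXV : X ⟂ᵢ[μ] V := h.comp measurable_id measurable_fst
  have hXVW : X ⟂ᵢ[μ] (V * W) := h.comp measurable_id (measurable_fst.mul measurable_snd)
  rw [covariance_eq_sub (hXV.memLp_two_mul hX hV) hW, mul_assoc,
    hXVW.integral_mul_eq_mul_integral hX.aestronglyMeasurable
      (hV.aestronglyMeasurable.mul hW.aestronglyMeasurable),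
    hXV.integral_mul_eq_mul_integral hX.aestronglyMeasurable hV.aestronglyMeasurable, hX0]
  ring

lemma IndepFun.covariance_mul_mul [IsProbabilityMeasure μ] {X X' V W : Ω → ℝ}
    (h : (fun ω ↦ (X ω, X' ω)) ⟂ᵢ[μ] fun ω ↦ (V ω, W ω)) (hX : MemLp X 2 μ)
    (hX' : MemLp X' 2 μ) (hV : MemLp V 2 μ) (hW : MemLp W 2 μ) (hX0 : μ[X] = 0)
    (hV0 : μ[V] = 0) : cov[X * V, X' * W; μ] = cov[X, X'; μ] * cov[V, W; μ] := by
  have hXV : X ⟂ᵢ[μ] V := h.comp measurable_fst measurable_fst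
  have hX'W : X' ⟂ᵢ[μ] W := h.comp measurable_snd measurable_snd
  have hXX'VW : (X * X') ⟂ᵢ[μ] (V * W) :=
    h.comp (measurable_fst.mul measurable_snd) (measurable_fst.mul measurable_snd)
  have hregroup : X * V * (X' * W) = X * X' * (V * W) := by ring
  rw [covariance_eq_sub (hXV.memLp_two_mul hX hV) (hX'W.memLp_two_mul hX' hW),
    covariance_eq_sub hX hX', covariance_eq_sub hV hW, hregroup,
    hXX'VW.integral_mul_eq_mul_integral
      (hX.aestronglyMeasurable.mul hX'.aestronglyMeasurable)
      (hV.aestronglyMeasurable.mul hW.aestronglyMeasurable),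
    hXV.integral_mul_eq_mul_integral hX.aestronglyMeasurable hV.aestronglyMeasurable, hX0, hV0]
  ring

variable {ι κ ι' κ' : Type*}

noncomputable def crossCov (X : Ω → ι → ℝ) (Y : Ω → κ → ℝ) (μ : Measure Ω) : Matrix ι κ ℝ :=
  Matrix.of fun i j ↦ cov[fun ω ↦ X ω i, fun ω ↦ Y ω j; μ]

section CrossCov

variable {X : Ω → ι → ℝ} {Y : Ω → κ → ℝ}

lemma crossCov_eq_sub [IsProbabilityMeasure μ] (hX : ∀ i, MemLp (fun ω ↦ X ω i) 2 μ)
    (hY : ∀ j, MemLp (fun ω ↦ Y ω j) 2 μ) :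
    crossCov X Y μ = Matrix.of fun i j ↦
      (∫ ω, X ω i * Y ω j ∂μ) - (∫ ω, X ω i ∂μ) * (∫ ω, Y ω j ∂μ) := by
  ext i j
  exact covariance_eq_sub (hX i) (hY j)

lemma crossCov_comm : crossCov Y X μ = (crossCov X Y μ)ᵀ := by
  ext i j
  exact covariance_comm _ _

lemma crossCov_add_left [IsFiniteMeasure μ] {X' : Ω → ι → ℝ}
    (hX : ∀ i, MemLp (fun ω ↦ X ω i) 2 μ) (hX' : ∀ i, MemLp (fun ω ↦ X' ω i) 2 μ)
    (hY : ∀ j, MemLp (fun ω ↦ Y ω j) 2 μ) :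
    crossCov (X + X') Y μ = crossCov X Y μ + crossCov X' Y μ := by
  ext i j
  exact covariance_add_left (hX i) (hX' i) (hY j)

lemma crossCov_add_right [IsFiniteMeasure μ] {Y' : Ω → κ → ℝ}
    (hX : ∀ i, MemLp (fun ω ↦ X ω i) 2 μ) (hY : ∀ j, MemLp (fun ω ↦ Y ω j) 2 μ)
    (hY' : ∀ j, MemLp (fun ω ↦ Y' ω j) 2 μ) :
    crossCov X (Y + Y') μ = crossCov X Y μ + crossCov X Y' μ := by
  ext i j
  exact covariance_add_right (hX i) (hY j) (hY' j)

end CrossCov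

section MulVec

variable [Fintype κ] {X : Ω → κ → ℝ}

lemma measurable_mulVec_apply (A : Matrix ι κ ℝ) (i : ι) :
    Measurable fun v : κ → ℝ ↦ (A *ᵥ v) i :=
  ((continuous_apply i).comp (continuous_const.matrix_mulVec continuous_id)).measurable

lemma memLp_mulVec_apply {p : ℝ≥0∞} (A : Matrix ι κ ℝ) (hX : ∀ j, MemLp (fun ω ↦ X ω j) p μ)
    (i : ι) : MemLp (fun ω ↦ (A *ᵥ X ω) i) p μ := by
  simpa only [mulVec, dotProduct] using memLp_finsetSum _ fun j _ ↦ (hX j).const_mul (A i j)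

lemma integral_mulVec_apply (A : Matrix ι κ ℝ) (hX : ∀ j, Integrable (fun ω ↦ X ω j) μ) (i : ι) :
    ∫ ω, (A *ᵥ X ω) i ∂μ = (A *ᵥ fun j ↦ ∫ ω, X ω j ∂μ) i := by
  simp only [mulVec, dotProduct]
  rw [integral_finsetSum _ fun j _ ↦ (hX j).const_mul (A i j)]
  simp_rw [integral_const_mul]

lemma crossCov_mulVec_mulVec [IsFiniteMeasure μ] [Fintype κ'] {Y : Ω → κ' → ℝ}
    (A : Matrix ι κ ℝ) (B : Matrix ι' κ' ℝ) (hX : ∀ j, MemLp (fun ω ↦ X ω j) 2 μ)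
    (hY : ∀ j, MemLp (fun ω ↦ Y ω j) 2 μ) :
    crossCov (fun ω ↦ A *ᵥ X ω) (fun ω ↦ B *ᵥ Y ω) μ = A * crossCov X Y μ * Bᵀ := by
  ext i l
  simp only [crossCov, mulVec, dotProduct, of_apply, mul_apply, transpose_apply]
  rw [covariance_fun_sum_fun_sum (fun j ↦ (hX j).const_mul (A i j))
    (fun j ↦ (hY j).const_mul (B l j)), Finset.sum_comm]
  simp only [covariance_const_mul_left, covariance_const_mul_right, Finset.sum_mul]
  refine Finset.sum_congr rfl fun b _ ↦ Finset.sum_congr rfl fun a _ ↦ ?_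
  ring

end MulVec

noncomputable def multiplicativeError [Fintype κ] (n : Ω → ι → ℝ) (A : Matrix ι κ ℝ)
    (x : Ω → κ → ℝ) : Ω → ι → ℝ :=
  fun ω i ↦ (n ω i - 1) * (A *ᵥ x ω) i

section MultiplicativeError

variable [IsProbabilityMeasure μ] [Fintype κ] {n : Ω → ι → ℝ} {x : Ω → κ → ℝ}
  (A : Matrix ι κ ℝ)

lemma memLp_multiplicativeError (h : n ⟂ᵢ[μ] x) (hn : ∀ i, MemLp (fun ω ↦ n ω i) 2 μ)
    (hx : ∀ j, MemLp (fun ω ↦ x ω j) 2 μ) (i : ι) :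
    MemLp (fun ω ↦ multiplicativeError n A x ω i) 2 μ :=
  IndepFun.memLp_two_mul (h.comp ((measurable_pi_apply i).sub_const 1)
    (measurable_mulVec_apply A i)) ((hn i).sub (memLp_const 1)) (memLp_mulVec_apply A hx i)

lemma integral_sub_one_eq_zero {f : Ω → ℝ} (hf : Integrable f μ) (hf1 : μ[f] = 1) :
    ∫ ω, (f ω - 1) ∂μ = 0 := by
  rw [integral_sub hf (integrable_const 1), hf1]
  simp

lemma crossCov_multiplicativeError_left_eq_zero {Z : Ω → κ' → ℝ}
    (h : n ⟂ᵢ[μ] fun ω ↦ (x ω, Z ω)) (hn : ∀ i, MemLp (fun ω ↦ n ω i) 2 μ)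
    (hx : ∀ j, MemLp (fun ω ↦ x ω j) 2 μ) (hZ : ∀ j, MemLp (fun ω ↦ Z ω j) 2 μ)
    (hn1 : ∀ i, μ[fun ω ↦ n ω i] = 1) : crossCov (multiplicativeError n A x) Z μ = 0 := by
  ext i j
  exact IndepFun.covariance_mul_left_eq_zero
    (h.comp ((measurable_pi_apply i).sub_const 1)
      (((measurable_mulVec_apply A i).comp measurable_fst).prodMk
        ((measurable_pi_apply j).comp measurable_snd)))
    ((hn i).sub (memLp_const 1)) (memLp_mulVec_apply A hx i) (hZ j)
    (integral_sub_one_eq_zero ((hn i).integrable one_le_two) (hn1 i))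

lemma crossCov_multiplicativeError_self (h : n ⟂ᵢ[μ] x) (hn : ∀ i, MemLp (fun ω ↦ n ω i) 2 μ)
    (hx : ∀ j, MemLp (fun ω ↦ x ω j) 2 μ) (hn1 : ∀ i, μ[fun ω ↦ n ω i] = 1)
    (hx0 : ∀ j, μ[fun ω ↦ x ω j] = 0) :
    crossCov (multiplicativeError n A x) (multiplicativeError n A x) μ
      = hadamard (crossCov n n μ) (A * crossCov x x μ * Aᵀ) := by
  ext i l
  rw [hadamard_apply, ← crossCov_mulVec_mulVec A A hx hx]
  have hAx0 : ∫ ω, (A *ᵥ x ω) i ∂μ = 0 := by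
    rw [integral_mulVec_apply A fun j ↦ (hx j).integrable one_le_two]
    simp [hx0, mulVec, dotProduct]
  refine (IndepFun.covariance_mul_mul
    (h.comp (((measurable_pi_apply i).sub_const 1).prodMk ((measurable_pi_apply l).sub_const 1))
      ((measurable_mulVec_apply A i).prodMk (measurable_mulVec_apply A l)))
    ((hn i).sub (memLp_const 1)) ((hn l).sub (memLp_const 1)) (memLp_mulVec_apply A hx i)
    (memLp_mulVec_apply A hx l) (integral_sub_one_eq_zero ((hn i).integrable one_le_two) (hn1 i))
    hAx0).trans ?_
  simp [crossCov, (hn i).integrable one_le_two, (hn l).integrable one_le_two]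

end MultiplicativeError

end ProbabilityTheory

open ProbabilityTheory

theorem embedded_error_schur_complement_general {Ω : Type*} [MeasurableSpace Ω]
    (P : Measure Ω) [IsProbabilityMeasure P] {m k : ℕ}
    (n η : Ω → Fin m → ℝ) (x : Ω → Fin k → ℝ)
    (hn2 : ∀ i, MemLp (fun ω => n ω i) 2 P)
    (hη2 : ∀ i, MemLp (fun ω => η ω i) 2 P)
    (hx2 : ∀ j, MemLp (fun ω => x ω j) 2 P)
    (hindep : Measure.map (fun ω => (n ω, (x ω, η ω))) P
        = (Measure.map n P).prod (Measure.map (fun ω => (x ω, η ω)) P))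
    (hnmean : ∀ i, ∫ ω, n ω i ∂P = 1)
    (hxmean : ∀ j, ∫ ω, x ω j ∂P = 0)
    (A : Matrix (Fin m) (Fin k) ℝ)
    (e : Ω → Fin m → ℝ)
    (he : e = fun ω i => (n ω i - 1) * A.mulVec (x ω) i + η ω i)
    (Γee Γηη Γnn : Matrix (Fin m) (Fin m) ℝ)
    (Γxx : Matrix (Fin k) (Fin k) ℝ)
    (Γex Γηx : Matrix (Fin m) (Fin k) ℝ)
    (hΓee : Γee = Matrix.of fun i j =>
      (∫ ω, e ω i * e ω j ∂P) - (∫ ω, e ω i ∂P) * (∫ ω, e ω j ∂P))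
    (hΓηη : Γηη = Matrix.of fun i j =>
      (∫ ω, η ω i * η ω j ∂P) - (∫ ω, η ω i ∂P) * (∫ ω, η ω j ∂P))
    (hΓnn : Γnn = Matrix.of fun i j =>
      (∫ ω, n ω i * n ω j ∂P) - (∫ ω, n ω i ∂P) * (∫ ω, n ω j ∂P))
    (hΓxx : Γxx = Matrix.of fun j l =>
      (∫ ω, x ω j * x ω l ∂P) - (∫ ω, x ω j ∂P) * (∫ ω, x ω l ∂P))
    (hΓex : Γex = Matrix.of fun i j =>
      (∫ ω, e ω i * x ω j ∂P) - (∫ ω, e ω i ∂P) * (∫ ω, x ω j ∂P))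
    (hΓηx : Γηx = Matrix.of fun i j =>
      (∫ ω, η ω i * x ω j ∂P) - (∫ ω, η ω i ∂P) * (∫ ω, x ω j ∂P)) :
    Γee - Γex * Γxx⁻¹ * Γexᵀ
      = Γηη + Matrix.hadamard Γnn (A * Γxx * Aᵀ) - Γηx * Γxx⁻¹ * Γηxᵀ := by
  have hn : AEMeasurable n P := aemeasurable_pi_lambda n fun i ↦ (hn2 i).aemeasurable
  have hη : AEMeasurable η P := aemeasurable_pi_lambda η fun i ↦ (hη2 i).aemeasurable
  have hx : AEMeasurable x P := aemeasurable_pi_lambda x fun j ↦ (hx2 j).aemeasurable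
  have hindep' : n ⟂ᵢ[P] fun ω ↦ (x ω, η ω) :=
    (indepFun_iff_map_prod_eq_prod_map_map hn (hx.prodMk hη)).2 hindep
  have hnx : n ⟂ᵢ[P] x := hindep'.comp measurable_id measurable_fst
  obtain rfl : e = multiplicativeError n A x + η := he
  set u := multiplicativeError n A x
  have hu2 : ∀ i, MemLp (fun ω ↦ u ω i) 2 P := memLp_multiplicativeError A hnx hn2 hx2
  have he2 : ∀ i, MemLp (fun ω ↦ (u + η) ω i) 2 P := fun i ↦ (hu2 i).add (hη2 i)
  have huη : crossCov u η P = 0 :=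
    crossCov_multiplicativeError_left_eq_zero A hindep' hn2 hx2 hη2 hnmean
  have hux : crossCov u x P = 0 :=
    crossCov_multiplicativeError_left_eq_zero A
      (hindep'.comp measurable_id (measurable_fst.prodMk measurable_fst)) hn2 hx2 hx2 hnmean
  have hΓex_eq : crossCov (u + η) x P = crossCov η x P := by
    rw [crossCov_add_left hu2 hη2 hx2, hux, zero_add]
  have hΓee_eq : crossCov (u + η) (u + η) P
      = crossCov η η P + hadamard (crossCov n n P) (A * crossCov x x P * Aᵀ) := by
    rw [crossCov_add_left hu2 hη2 he2, crossCov_add_right hu2 hu2 hη2,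
      crossCov_add_right hη2 hu2 hη2, crossCov_multiplicativeError_self A hnx hn2 hx2 hnmean hxmean,
      huη, crossCov_comm (X := u), huη, transpose_zero, add_zero, zero_add, add_comm]
  subst hΓee hΓηη hΓnn hΓxx hΓex hΓηx
  rw [← crossCov_eq_sub he2 he2, ← crossCov_eq_sub hη2 hη2, ← crossCov_eq_sub hn2 hn2,
    ← crossCov_eq_sub hx2 hx2, ← crossCov_eq_sub he2 hx2, ← crossCov_eq_sub hη2 hx2,
    hΓee_eq, hΓex_eq]

/-- Schur complement of the joint covariance of `(e, x)` for the embedded error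
`e = (n - 1) ⊙ (A x) + η`: under independence of `n` from `(x, η)`, unit means of `n`,
zero means of `x`, and invertibility of `Γxx`,
`Γee - Γex Γxx⁻¹ Γexᵀ = Γηη + Γnn ⊙ (A Γxx Aᵀ) - Γηx Γxx⁻¹ Γηxᵀ`. -/
theorem embedded_error_schur_complement {Ω : Type*} [MeasurableSpace Ω]
    (P : Measure Ω) [IsProbabilityMeasure P] {m k : ℕ}
    (n η : Ω → Fin m → ℝ) (x : Ω → Fin k → ℝ)
    (hn : Measurable n) (hη : Measurable η) (hx : Measurable x)
    (hn2 : ∀ i, MemLp (fun ω => n ω i) 2 P)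
    (hη2 : ∀ i, MemLp (fun ω => η ω i) 2 P)
    (hx2 : ∀ j, MemLp (fun ω => x ω j) 2 P)
    (hindep : Measure.map (fun ω => (n ω, (x ω, η ω))) P
        = (Measure.map n P).prod (Measure.map (fun ω => (x ω, η ω)) P))
    (hnmean : ∀ i, ∫ ω, n ω i ∂P = 1)
    (hxmean : ∀ j, ∫ ω, x ω j ∂P = 0)
    (A : Matrix (Fin m) (Fin k) ℝ)
    (e : Ω → Fin m → ℝ)
    (he : e = fun ω i => (n ω i - 1) * A.mulVec (x ω) i + η ω i)
    (Γee Γηη Γnn : Matrix (Fin m) (Fin m) ℝ)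
    (Γxx : Matrix (Fin k) (Fin k) ℝ)
    (Γex Γηx : Matrix (Fin m) (Fin k) ℝ)
    (hΓee : Γee = Matrix.of fun i j =>
      (∫ ω, e ω i * e ω j ∂P) - (∫ ω, e ω i ∂P) * (∫ ω, e ω j ∂P))
    (hΓηη : Γηη = Matrix.of fun i j =>
      (∫ ω, η ω i * η ω j ∂P) - (∫ ω, η ω i ∂P) * (∫ ω, η ω j ∂P))
    (hΓnn : Γnn = Matrix.of fun i j =>
      (∫ ω, n ω i * n ω j ∂P) - (∫ ω, n ω i ∂P) * (∫ ω, n ω j ∂P))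
    (hΓxx : Γxx = Matrix.of fun j l =>
      (∫ ω, x ω j * x ω l ∂P) - (∫ ω, x ω j ∂P) * (∫ ω, x ω l ∂P))
    (hΓex : Γex = Matrix.of fun i j =>
      (∫ ω, e ω i * x ω j ∂P) - (∫ ω, e ω i ∂P) * (∫ ω, x ω j ∂P))
    (hΓηx : Γηx = Matrix.of fun i j =>
      (∫ ω, η ω i * x ω j ∂P) - (∫ ω, η ω i ∂P) * (∫ ω, x ω j ∂P))
    (hinv : IsUnit Γxx) :
    Γee - Γex * Γxx⁻¹ * Γexᵀ
      = Γηη + Matrix.hadamard Γnn (A * Γxx * Aᵀ) - Γηx * Γxx⁻¹ * Γηxᵀ :=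
  embedded_error_schur_complement_general P n η x hn2 hη2 hx2 hindep hnmean hxmean A e he Γee Γηη
    Γnn Γxx Γex Γηx hΓee hΓηη hΓnn hΓxx hΓex hΓηx
end

section
/- Let x : Ω → ℝ^k and η, n : Ω → ℝ^m be mutually independent random vectors on a probability space (Ω, F, P) having probability density functions π_x, π_η, π_n respectively with respect to Lebesgue measure, and let A ∈ ℝ^{m×k}. Define the intermediate variable u = Ax + η and the observation y = n ⊙ u. Then the random vector (x, u, y) with values in ℝ^k × ℝ^m × ℝ^m has joint probability density function (ξ, v, w) ↦ π_x(ξ) · π_η(v − Aξ) · (∏_{i=1}^m |v_i|^{-1}) · π_n(w_1/v_1, …, w_m/v_m). (This is the density factorization π(u, x | y) ∝ π_x(x) π(u | x) π(y | u) underlying the separable model y = n ⊙ (Ax + η).) -/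
open MeasureTheory Matrix
open scoped NNReal ENNReal

/-
The triple `(x, u, y)` is the image of `(x, η, n)` under `(ξ, e, ν) ↦ (ξ, Aξ + e, ν ⊙ (Aξ + e))`.
This map is the shear `(ξ, e, ν) ↦ (ξ, Aξ + e, ν)`, which preserves Lebesgue measure, followed by
the fibrewise scaling `(ξ, v, ν) ↦ (ξ, v, ν ⊙ v)`, which has Jacobian `|∏ i, v i|` and is
invertible off the null set where some `v i` vanishes; the change of variables formula gives the
density. The densities need not be measurable, so the product density of the independent triple
is obtained by comparison with measurable minorants of the same total mass, which have the same
`withDensity`.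
-/

section WithDensity

variable {α β : Type*} [MeasurableSpace α] [MeasurableSpace β] {μ : Measure α} {ν : Measure β}

theorem withDensity_eq_of_le_of_lintegral_le {f g : α → ℝ≥0∞} (hgf : g ≤ f)
    (hfg : ∫⁻ a, f a ∂μ ≤ ∫⁻ a, g a ∂μ) (hg : ∫⁻ a, g a ∂μ ≠ ∞) :
    μ.withDensity g = μ.withDensity f := by
  have := isFiniteMeasure_withDensity hg
  refine Measure.eq_of_le_of_measure_univ_eq (withDensity_mono (ae_of_all _ hgf)) ?_
  rw [withDensity_apply _ .univ, withDensity_apply _ .univ, Measure.restrict_univ]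
  exact le_antisymm (lintegral_mono hgf) hfg

theorem exists_measurable_le_withDensity_eq (f : α → ℝ≥0∞) (hf : ∫⁻ a, f a ∂μ ≠ ∞) :
    ∃ g, Measurable g ∧ g ≤ f ∧ ∫⁻ a, g a ∂μ = ∫⁻ a, f a ∂μ ∧
      μ.withDensity g = μ.withDensity f := by
  obtain ⟨g, hgm, hgf, hfg⟩ := exists_measurable_le_lintegral_eq μ f
  exact ⟨g, hgm, hgf, hfg.symm, withDensity_eq_of_le_of_lintegral_le hgf hfg.le (hfg ▸ hf)⟩

theorem lintegral_prod_mul_le [SFinite ν] (f : α → ℝ≥0∞) (g : β → ℝ≥0∞) (hf : ∀ a, f a ≠ ∞)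
    (hg : ∫⁻ b, g b ∂ν ≠ ∞) :
    ∫⁻ z, f z.1 * g z.2 ∂μ.prod ν ≤ (∫⁻ a, f a ∂μ) * ∫⁻ b, g b ∂ν :=
  calc ∫⁻ z, f z.1 * g z.2 ∂μ.prod ν ≤ ∫⁻ a, ∫⁻ b, f a * g b ∂ν ∂μ := lintegral_prod_le _
    _ = (∫⁻ a, f a ∂μ) * ∫⁻ b, g b ∂ν := by
      simp_rw [lintegral_const_mul' _ _ (hf _), lintegral_mul_const' _ _ hg]

theorem prod_withDensity_of_ne_top [SFinite μ] [SFinite ν] {f : α → ℝ≥0∞} {g : β → ℝ≥0∞}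
    (hf : ∀ a, f a ≠ ∞) [IsFiniteMeasure (μ.withDensity f)] [IsFiniteMeasure (ν.withDensity g)] :
    (μ.withDensity f).prod (ν.withDensity g) = (μ.prod ν).withDensity fun z ↦ f z.1 * g z.2 := by
  have hfi : ∫⁻ a, f a ∂μ ≠ ∞ := by simpa using measure_ne_top (μ.withDensity f) Set.univ
  have hgi : ∫⁻ b, g b ∂ν ≠ ∞ := by simpa using measure_ne_top (ν.withDensity g) Set.univ
  obtain ⟨f₀, hf₀, hf₀f, hf₀i, hf₀μ⟩ := exists_measurable_le_withDensity_eq f hfi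
  obtain ⟨g₀, hg₀, hg₀g, hg₀i, hg₀ν⟩ := exists_measurable_le_withDensity_eq g hgi
  rw [← hf₀μ, ← hg₀ν, prod_withDensity hf₀ hg₀]
  refine withDensity_eq_of_le_of_lintegral_le (fun z ↦ mul_le_mul' (hf₀f _) (hg₀g _)) ?_ ?_ <;>
    rw [lintegral_prod_mul hf₀.aemeasurable hg₀.aemeasurable, hf₀i, hg₀i]
  · exact lintegral_prod_mul_le f g hf hgi
  · exact ENNReal.mul_ne_top hfi hgi

theorem map_withDensity_comp (e : α ≃ᵐ β) (μ : Measure α) (g : β → ℝ≥0∞) :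
    (μ.withDensity (g ∘ e)).map e = (μ.map e).withDensity g := by
  ext s hs
  rw [e.map_apply, withDensity_apply _ hs, withDensity_apply _ (e.measurable hs),
    e.restrict_map, lintegral_map_equiv]
  rfl

theorem map_withDensity_mul_comp (e : α ≃ᵐ β) {J : α → ℝ≥0∞} (hJ : Measurable J)
    (hJ_ne_top : ∀ a, J a ≠ ∞) (he : (μ.withDensity J).map e = ν) (g : β → ℝ≥0∞) :
    (μ.withDensity fun a ↦ J a * g (e a)).map e = ν.withDensity g := by
  have : μ.withDensity (fun a ↦ J a * g (e a)) = (μ.withDensity J).withDensity (g ∘ e) := by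
    ext s hs
    rw [withDensity_apply _ hs, withDensity_apply _ hs,
      setLIntegral_withDensity_eq_setLIntegral_mul_non_measurable _ hJ _ hs
        (ae_of_all _ fun a ↦ (hJ_ne_top a).lt_top)]
    rfl
  rw [this, map_withDensity_comp, he]

theorem map_withDensity_of_measurePreserving (e : α ≃ᵐ β) (he : MeasurePreserving e μ ν)
    (g : α → ℝ≥0∞) : (μ.withDensity g).map e = ν.withDensity (g ∘ e.symm) := by
  rw [← he.map_eq, ← map_withDensity_comp, Function.comp_assoc, e.symm_comp_self,
    Function.comp_id]

end WithDensity

section Shear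

variable {α G β : Type*} [MeasurableSpace α] [MeasurableSpace G] [MeasurableSpace β]

def shearAdd [AddCommGroup G] [MeasurableAdd₂ G] [MeasurableSub₂ G] (f : α → G)
    (hf : Measurable f) : α × G × β ≃ᵐ α × G × β where
  toFun p := (p.1, f p.1 + p.2.1, p.2.2)
  invFun p := (p.1, p.2.1 - f p.1, p.2.2)
  left_inv p := by simp
  right_inv p := by simp
  measurable_toFun := by simp only [Equiv.coe_fn_mk]; fun_prop
  measurable_invFun := by simp only [Equiv.coe_fn_symm_mk]; fun_prop

theorem measurePreserving_shearAdd [AddCommGroup G] [MeasurableAdd₂ G] [MeasurableSub₂ G]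
    {f : α → G} (hf : Measurable f) (μ : Measure α) (ν : Measure G) (ρ : Measure β)
    [SFinite μ] [SFinite ν] [SFinite ρ] [ν.IsAddLeftInvariant] :
    MeasurePreserving (shearAdd (β := β) f hf) (μ.prod (ν.prod ρ)) (μ.prod (ν.prod ρ)) :=
  (MeasurePreserving.id μ).skew_product (g := fun a (q : G × β) ↦ (f a + q.1, q.2)) (by fun_prop)
    (ae_of_all _ fun a ↦ ((measurePreserving_add_left ν (f a)).prod (.id ρ)).map_eq)

end Shear

section Scaling

variable {ι β : Type*} [MeasurableSpace β]

theorem ae_forall_ne_zero [Fintype ι] : ∀ᵐ v ∂(volume : Measure (ι → ℝ)), ∀ i, v i ≠ 0 := by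
  refine ae_all_iff.2 fun i ↦ ?_
  simpa [ae_iff, volume_pi] using Measure.pi_hyperplane (fun _ : ι ↦ volume) i 0

theorem map_mul_volume_pi [Fintype ι] {v : ι → ℝ} (hv : ∀ i, v i ≠ 0) :
    (volume : Measure (ι → ℝ)).map (· * v) = ENNReal.ofReal |∏ i, v i|⁻¹ • volume := by
  classical
  have hdet : (diagonal v).det ≠ 0 := by
    simpa [det_diagonal] using Finset.prod_ne_zero_iff.2 fun i _ ↦ hv i
  have hmul : ⇑(toLin' (diagonal v)) = (· * v) := by
    ext w i
    simp [mulVec_diagonal, mul_comm]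
  rw [← hmul, Real.map_matrix_volume_pi_eq_smul_volume_pi hdet, det_diagonal, abs_inv]

noncomputable def shearMul (c : β → ι → ℝ) (hc : Measurable c) (hc₀ : ∀ b i, c b i ≠ 0) :
    β × (ι → ℝ) ≃ᵐ β × (ι → ℝ) where
  toFun p := (p.1, p.2 * c p.1)
  invFun p := (p.1, p.2 / c p.1)
  left_inv p := by ext i <;> simp [hc₀]
  right_inv p := by ext i <;> simp [hc₀]
  measurable_toFun := by simp only [Equiv.coe_fn_mk]; fun_prop
  measurable_invFun := by simp only [Equiv.coe_fn_symm_mk]; fun_prop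

theorem map_shearMul_withDensity [Fintype ι] {c : β → ι → ℝ} (hc : Measurable c)
    (hc₀ : ∀ b i, c b i ≠ 0) (μ : Measure β) [SFinite μ] :
    ((μ.prod volume).withDensity fun p ↦ ENNReal.ofReal |∏ i, c p.1 i|).map
      (shearMul c hc hc₀) = μ.prod volume := by
  have hJ : Measurable fun b ↦ ENNReal.ofReal |∏ i, c b i| := by fun_prop
  rw [← prod_withDensity_left hJ]
  ext s hs
  have hs' := (shearMul c hc hc₀).measurable hs
  rw [Measure.map_apply (shearMul c hc hc₀).measurable hs, Measure.prod_apply hs',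
    Measure.prod_apply hs, lintegral_withDensity_eq_lintegral_mul _ hJ
      (measurable_measure_prodMk_left hs')]
  refine lintegral_congr fun b ↦ ?_
  have hfib : Prod.mk b ⁻¹' (shearMul c hc hc₀ ⁻¹' s) = (· * c b) ⁻¹' (Prod.mk b ⁻¹' s) := rfl
  rw [Pi.mul_apply, hfib, ← Measure.map_apply (by fun_prop) (measurable_prodMk_left hs),
    map_mul_volume_pi (hc₀ b), Measure.smul_apply, smul_eq_mul, ← mul_assoc,
    ← ENNReal.ofReal_mul (abs_nonneg _), mul_inv_cancel₀ (by simp [Finset.prod_ne_zero_iff, hc₀]),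
    ENNReal.ofReal_one, one_mul]

end Scaling

section Hadamard

variable {α ι : Type*} [MeasurableSpace α]

-- Makes the fibrewise scaling by `v` invertible; it agrees with `v` off a Lebesgue-null set.
noncomputable def zeroToOne (v : ι → ℝ) : ι → ℝ := fun i ↦ if v i = 0 then 1 else v i

theorem measurable_zeroToOne : Measurable (zeroToOne (ι := ι)) :=
  measurable_pi_lambda _ fun i ↦
    Measurable.ite (measurableSet_eq_fun (measurable_pi_apply i) measurable_const)
      measurable_const (measurable_pi_apply i)

theorem zeroToOne_ne_zero (v : ι → ℝ) (i : ι) : zeroToOne v i ≠ 0 := by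
  unfold zeroToOne
  split_ifs with h <;> simp [h]

theorem zeroToOne_of_ne_zero {v : ι → ℝ} (hv : ∀ i, v i ≠ 0) : zeroToOne v = v :=
  funext fun i ↦ if_neg (hv i)

theorem map_hadamard_withDensity [Fintype ι] (μ : Measure α) [SFinite μ]
    (ρ : α × (ι → ℝ) × (ι → ℝ) → ℝ≥0∞) :
    ((μ.prod (volume.prod volume)).withDensity ρ).map (fun p ↦ (p.1, p.2.1, p.2.2 * p.2.1)) =
      (μ.prod (volume.prod volume)).withDensity fun q ↦
        ρ (q.1, q.2.1, q.2.2 / q.2.1) * ENNReal.ofReal (∏ i, |q.2.1 i|⁻¹) := by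
  set e := (MeasurableEquiv.refl α).prodCongr
    (shearMul zeroToOne measurable_zeroToOne zeroToOne_ne_zero)
  have he : ∀ p, e p = (p.1, p.2.1, p.2.2 * zeroToOne p.2.1) := fun _ ↦ rfl
  set J : (ι → ℝ) × (ι → ℝ) → ℝ≥0∞ := fun q ↦ ENNReal.ofReal |∏ i, zeroToOne q.1 i|
  have hJ : Measurable J := by
    have := measurable_zeroToOne (ι := ι)
    fun_prop
  have hgood : ∀ᵐ p ∂(μ.prod (volume.prod volume)), ∀ i, (p : α × (ι → ℝ) × (ι → ℝ)).2.1 i ≠ 0 :=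
    Measure.quasiMeasurePreserving_snd.ae <|
      Measure.quasiMeasurePreserving_fst.ae ae_forall_ne_zero
  have hJac :
      ((μ.prod (volume.prod volume)).withDensity fun p ↦ J p.2).map e = μ.prod (volume.prod volume) := by
    rw [← prod_withDensity_right hJ]
    exact ((MeasurePreserving.id μ).prod
      ⟨MeasurableEquiv.measurable _, map_shearMul_withDensity _ _ volume⟩).map_eq
  set σ : α × (ι → ℝ) × (ι → ℝ) → ℝ≥0∞ := fun q ↦
    ρ (q.1, q.2.1, q.2.2 / q.2.1) * ENNReal.ofReal (∏ i, |q.2.1 i|⁻¹)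
  calc ((μ.prod (volume.prod volume)).withDensity ρ).map (fun p ↦ (p.1, p.2.1, p.2.2 * p.2.1))
      = ((μ.prod (volume.prod volume)).withDensity ρ).map e := by
        refine Measure.map_congr ((withDensity_absolutelyContinuous _ _).ae_le ?_)
        filter_upwards [hgood] with p hp
        rw [he, zeroToOne_of_ne_zero hp]
    _ = ((μ.prod (volume.prod volume)).withDensity fun p ↦ J p.2 * σ (e p)).map e := by
        refine congrArg _ (withDensity_congr_ae ?_)
        filter_upwards [hgood] with p hp
        have hw : p.2.2 * p.2.1 / p.2.1 = p.2.2 := funext fun i ↦ mul_div_cancel_right₀ _ (hp i)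
        have hdet : ENNReal.ofReal |∏ i, p.2.1 i| * ENNReal.ofReal (∏ i, |p.2.1 i|⁻¹) = 1 := by
          rw [Finset.prod_inv_distrib, ← Finset.abs_prod, ← ENNReal.ofReal_mul (abs_nonneg _),
            mul_inv_cancel₀ (by simpa [Finset.prod_ne_zero_iff] using hp), ENNReal.ofReal_one]
        simp only [σ, J, he, zeroToOne_of_ne_zero hp, hw]
        rw [mul_left_comm, hdet, mul_one]
    _ = _ :=
        map_withDensity_mul_comp e (hJ.comp measurable_snd) (fun _ ↦ ENNReal.ofReal_ne_top) hJac _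

theorem map_separableModel_withDensity [Fintype ι] (μ : Measure α) [SFinite μ] {f : α → ι → ℝ}
    (hf : Measurable f) (ρ : α × (ι → ℝ) × (ι → ℝ) → ℝ≥0∞) :
    ((μ.prod (volume.prod volume)).withDensity ρ).map
        (fun p ↦ (p.1, f p.1 + p.2.1, p.2.2 * (f p.1 + p.2.1))) =
      (μ.prod (volume.prod volume)).withDensity fun q ↦
        ρ (q.1, q.2.1 - f q.1, q.2.2 / q.2.1) * ENNReal.ofReal (∏ i, |q.2.1 i|⁻¹) := by
  have hshear := measurePreserving_shearAdd (β := ι → ℝ) hf μ volume volume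
  rw [show (fun p : α × (ι → ℝ) × (ι → ℝ) ↦ (p.1, f p.1 + p.2.1, p.2.2 * (f p.1 + p.2.1))) =
      (fun p ↦ (p.1, p.2.1, p.2.2 * p.2.1)) ∘ shearAdd f hf from rfl,
    ← Measure.map_map (by fun_prop) hshear.measurable,
    map_withDensity_of_measurePreserving _ hshear, map_hadamard_withDensity]
  rfl

end Hadamard

/-- Separable model `y = n ⊙ (A x + η)` with intermediate variable `u = A x + η`:
if `x`, `η`, `n` are mutually independent with pdfs `πx`, `πη`, `πn`, then the triple
`(x, u, y)` has joint pdf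
`(ξ, v, w) ↦ πx ξ * πη (v - A ξ) * (∏ i, |v i|⁻¹) * πn (w / v)` (componentwise division). -/
theorem separable_model_joint_density {Ω : Type*} [MeasurableSpace Ω]
    (P : Measure Ω) [IsProbabilityMeasure P] {m k : ℕ}
    (x : Ω → Fin k → ℝ) (η n : Ω → Fin m → ℝ)
    (hx : Measurable x) (hη : Measurable η) (hn : Measurable n)
    (πx : (Fin k → ℝ) → ℝ≥0) (πη πn : (Fin m → ℝ) → ℝ≥0)
    (hπx : Measure.map x P = volume.withDensity fun t => (πx t : ℝ≥0∞))
    (hπη : Measure.map η P = volume.withDensity fun t => (πη t : ℝ≥0∞))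
    (hπn : Measure.map n P = volume.withDensity fun t => (πn t : ℝ≥0∞))
    (hindep : Measure.map (fun ω => (x ω, η ω, n ω)) P
        = (Measure.map x P).prod ((Measure.map η P).prod (Measure.map n P)))
    (A : Matrix (Fin m) (Fin k) ℝ) :
    Measure.map
        (fun ω => (x ω, A.mulVec (x ω) + η ω,
          fun i => n ω i * (A.mulVec (x ω) + η ω) i)) P
      = volume.withDensity
          (fun p : (Fin k → ℝ) × (Fin m → ℝ) × (Fin m → ℝ) =>
            (πx p.1 : ℝ≥0∞) * (πη (p.2.1 - A.mulVec p.1) : ℝ≥0∞)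
              * ENNReal.ofReal (∏ i, |p.2.1 i|⁻¹)
              * (πn (fun i => p.2.2 i / p.2.1 i) : ℝ≥0∞)) := by
  have : IsFiniteMeasure (volume.withDensity fun t => (πx t : ℝ≥0∞)) := hπx ▸ inferInstance
  have : IsFiniteMeasure (volume.withDensity fun t => (πη t : ℝ≥0∞)) := hπη ▸ inferInstance
  have : IsFiniteMeasure (volume.withDensity fun t => (πn t : ℝ≥0∞)) := hπn ▸ inferInstance
  have hηn := prod_withDensity_of_ne_top (μ := volume) (ν := volume)
    (g := fun t => (πn t : ℝ≥0∞)) fun t => ENNReal.coe_ne_top (r := πη t)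
  have : IsFiniteMeasure ((volume.prod volume).withDensity
    fun q : (Fin m → ℝ) × (Fin m → ℝ) => (πη q.1 : ℝ≥0∞) * πn q.2) := hηn ▸ inferInstance
  have hlaw : Measure.map (fun ω => (x ω, η ω, n ω)) P =
      (volume.prod (volume.prod volume)).withDensity
        fun p => (πx p.1 : ℝ≥0∞) * ((πη p.2.1 : ℝ≥0∞) * πn p.2.2) := by
    rw [hindep, hπx, hπη, hπn, hηn, prod_withDensity_of_ne_top fun t => ENNReal.coe_ne_top]
  have hA : Measurable A.mulVec := by fun_prop
  rw [show (fun ω => (x ω, A *ᵥ x ω + η ω, fun i => n ω i * (A *ᵥ x ω + η ω) i)) =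
      (fun p => (p.1, A *ᵥ p.1 + p.2.1, p.2.2 * (A *ᵥ p.1 + p.2.1))) ∘
        fun ω => (x ω, η ω, n ω) from rfl,
    ← Measure.map_map (by fun_prop) (by fun_prop), hlaw, map_separableModel_withDensity _ hA]
  refine congrArg _ (funext fun p => ?_)
  change (πx p.1 : ℝ≥0∞) * ((πη (p.2.1 - A *ᵥ p.1) : ℝ≥0∞) * πn (p.2.2 / p.2.1)) * _ = _
  rw [← mul_assoc, mul_right_comm]
  rfl
end
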